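/- For every n ≥ 0, the number of Motzkin paths of length n with an odd number of U steps and the number with an even number of U steps differ in parity from the Motzkin number exactly as: b(n) = M_n − a(n), and a(n) is odd, so b(n) ≡ M_n + 1 (mod 2). -/
import Mathlib

inductive MStep where
  | U : MStep
  | D : MStep
  | H : MStep
deriving DecidableEq

/-- A word in {U,D,H} is a Motzkin path if #U = #D and no prefix has more D's than U's. -/
def IsMotzkin (w : List MStep) : Prop :=
  w.count MStep.U = w.count MStep.D ∧
  ∀ p : List MStep, p <+: w → p.count MStep.D ≤ p.count MStep.U

/-- Number of Motzkin paths of length n (the n-th Motzkin number). -/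
noncomputable def motzkinNum (n : ℕ) : ℕ :=
  Nat.card {w : List MStep // w.length = n ∧ IsMotzkin w}

/-- Number of Motzkin paths of length n with an even number of U steps. -/
noncomputable def evenMotzkin (n : ℕ) : ℕ :=
  Nat.card {w : List MStep // w.length = n ∧ IsMotzkin w ∧ Even (w.count MStep.U)}

/-- Number of Motzkin paths of length n with an odd number of U steps. -/
noncomputable def oddMotzkin (n : ℕ) : ℕ :=
  Nat.card {w : List MStep // w.length = n ∧ IsMotzkin w ∧ Odd (w.count MStep.U)}

/-- The shadow of the n-th Motzkin number: s(n) = a(n) - b(n). -/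
noncomputable def shadow (n : ℕ) : ℤ :=
  (evenMotzkin n : ℤ) - (oddMotzkin n : ℤ)

/-! ### Auxiliary development -/

instance : Fintype MStep := ⟨{MStep.U, MStep.D, MStep.H}, by intro x; cases x <;> simp⟩

namespace MotzkinAux

open MStep

/-- First-return splitting: scan at depth `b`, split at the `D` that brings depth to -1. -/
def spl : ℕ → List MStep → List MStep × List MStep
  | _, [] => ([], [])
  | 0, MStep.D :: t => ([], t)
  | (b+1), MStep.D :: t => (MStep.D :: (spl b t).1, (spl b t).2)
  | b, MStep.U :: t => (MStep.U :: (spl (b+1) t).1, (spl (b+1) t).2)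
  | b, MStep.H :: t => (MStep.H :: (spl b t).1, (spl b t).2)

lemma prefix_append_cases {α : Type*} {r a b : List α} (h : r <+: a ++ b) :
    r <+: a ∨ ∃ s, s <+: b ∧ r = a ++ s := by
  rcases le_or_gt r.length a.length with hl | hl
  · exact Or.inl (List.prefix_of_prefix_length_le h (a.prefix_append b) hl)
  · right
    have h2 : a <+: r := List.prefix_of_prefix_length_le (a.prefix_append b) h hl.le
    obtain ⟨s, rfl⟩ := h2
    exact ⟨s, (List.prefix_append_right_inj a).mp h, rfl⟩

lemma prefix_cons_cases {α : Type*} {r : List α} {x : α} {t : List α} (h : r <+: x :: t) :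
    r = [] ∨ ∃ r', r' <+: t ∧ r = x :: r' := by
  cases r with
  | nil => exact Or.inl rfl
  | cons y r' =>
    obtain ⟨rfl, hr⟩ := List.cons_prefix_cons.mp h
    exact Or.inr ⟨r', hr, rfl⟩

lemma spl_sound : ∀ (t : List MStep) (b : ℕ),
    t.count MStep.D = t.count MStep.U + b + 1 →
    (∀ r, r <+: t → r.count MStep.D ≤ r.count MStep.U + b + 1) →
    t = (spl b t).1 ++ MStep.D :: (spl b t).2 ∧
    (spl b t).1.count MStep.D = (spl b t).1.count MStep.U + b ∧
    (∀ r, r <+: (spl b t).1 → r.count MStep.D ≤ r.count MStep.U + b) := by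
  intro t
  induction t with
  | nil => intro b h1 _; simp at h1
  | cons x t ih =>
    intro b h1 h2
    cases x with
    | D =>
      cases b with
      | zero =>
        refine ⟨by simp [spl], by simp [spl], ?_⟩
        intro r hr
        simp [spl] at hr
        simp [hr]
      | succ b' =>
        have h1' : t.count MStep.D = t.count MStep.U + b' + 1 := by
          simp [List.count_cons] at h1; omega
        have h2' : ∀ r, r <+: t → r.count MStep.D ≤ r.count MStep.U + b' + 1 := by
          intro r hr
          have := h2 (MStep.D :: r) (List.cons_prefix_cons.mpr ⟨rfl, hr⟩)
          simp [List.count_cons] at this; omega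
        obtain ⟨e1, e2, e3⟩ := ih b' h1' h2'
        refine ⟨?_, ?_, ?_⟩
        · simpa [spl] using congrArg (MStep.D :: ·) e1
        · simp only [spl, List.count_cons]
          simp; omega
        · intro r hr
          simp only [spl] at hr
          rcases prefix_cons_cases hr with rfl | ⟨r', hr', rfl⟩
          · simp
          · have := e3 r' hr'
            simp [List.count_cons]; omega
    | U =>
      have h1' : t.count MStep.D = t.count MStep.U + (b+1) + 1 := by
        simp [List.count_cons] at h1; omega
      have h2' : ∀ r, r <+: t → r.count MStep.D ≤ r.count MStep.U + (b+1) + 1 := by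
        intro r hr
        have := h2 (MStep.U :: r) (List.cons_prefix_cons.mpr ⟨rfl, hr⟩)
        simp [List.count_cons] at this; omega
      obtain ⟨e1, e2, e3⟩ := ih (b+1) h1' h2'
      refine ⟨?_, ?_, ?_⟩
      · simpa [spl] using congrArg (MStep.U :: ·) e1
      · simp only [spl, List.count_cons]; simp; omega
      · intro r hr
        simp only [spl] at hr
        rcases prefix_cons_cases hr with rfl | ⟨r', hr', rfl⟩
        · simp
        · have := e3 r' hr'
          simp [List.count_cons]; omega
    | H =>
      have h1' : t.count MStep.D = t.count MStep.U + b + 1 := by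
        simp [List.count_cons] at h1; omega
      have h2' : ∀ r, r <+: t → r.count MStep.D ≤ r.count MStep.U + b + 1 := by
        intro r hr
        have := h2 (MStep.H :: r) (List.cons_prefix_cons.mpr ⟨rfl, hr⟩)
        simp [List.count_cons] at this; omega
      obtain ⟨e1, e2, e3⟩ := ih b h1' h2'
      refine ⟨?_, ?_, ?_⟩
      · simpa [spl] using congrArg (MStep.H :: ·) e1
      · simp only [spl, List.count_cons]; simp; omega
      · intro r hr
        simp only [spl] at hr
        rcases prefix_cons_cases hr with rfl | ⟨r', hr', rfl⟩
        · simp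
        · have := e3 r' hr'
          simp [List.count_cons]; omega

lemma spl_eq : ∀ (p : List MStep) (b : ℕ) (q : List MStep),
    p.count MStep.D = p.count MStep.U + b →
    (∀ r, r <+: p → r.count MStep.D ≤ r.count MStep.U + b) →
    spl b (p ++ MStep.D :: q) = (p, q) := by
  intro p
  induction p with
  | nil =>
    intro b q h1 _
    simp at h1
    subst h1
    simp [spl]
  | cons x p ih =>
    intro b q h1 h2
    cases x with
    | D =>
      have hb : 1 ≤ b := by
        have := h2 [MStep.D] ⟨p, rfl⟩
        simpa using this
      obtain ⟨b', rfl⟩ : ∃ b', b = b' + 1 := ⟨b - 1, by omega⟩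
      have h1' : p.count MStep.D = p.count MStep.U + b' := by
        simp [List.count_cons] at h1; omega
      have h2' : ∀ r, r <+: p → r.count MStep.D ≤ r.count MStep.U + b' := by
        intro r hr
        have := h2 (MStep.D :: r) (List.cons_prefix_cons.mpr ⟨rfl, hr⟩)
        simp [List.count_cons] at this; omega
      have := ih b' q h1' h2'
      simp [spl, this]
    | U =>
      have h1' : p.count MStep.D = p.count MStep.U + (b+1) := by
        simp [List.count_cons] at h1; omega
      have h2' : ∀ r, r <+: p → r.count MStep.D ≤ r.count MStep.U + (b+1) := by
        intro r hr
        have := h2 (MStep.U :: r) (List.cons_prefix_cons.mpr ⟨rfl, hr⟩)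
        simp [List.count_cons] at this; omega
      have := ih (b+1) q h1' h2'
      simp [spl, this]
    | H =>
      have h1' : p.count MStep.D = p.count MStep.U + b := by
        simp [List.count_cons] at h1; omega
      have h2' : ∀ r, r <+: p → r.count MStep.D ≤ r.count MStep.U + b := by
        intro r hr
        have := h2 (MStep.H :: r) (List.cons_prefix_cons.mpr ⟨rfl, hr⟩)
        simp [List.count_cons] at this; omega
      have := ih b q h1' h2'
      simp [spl, this]
def phi : List MStep → List MStep
  | [] => []
  | MStep.H :: t => MStep.H :: phi t
  | MStep.U :: t => MStep.U :: ((spl 0 t).2 ++ MStep.D :: (spl 0 t).1)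
  | MStep.D :: t => MStep.D :: t

lemma motzkin_UD {p q : List MStep} (hp : IsMotzkin p) (hq : IsMotzkin q) :
    IsMotzkin (MStep.U :: (p ++ MStep.D :: q)) := by
  constructor
  · simp [List.count_cons, List.count_append, hp.1, hq.1]
    omega
  · intro r hr
    rcases prefix_cons_cases hr with rfl | ⟨r', hr', rfl⟩
    · simp
    · rcases prefix_append_cases hr' with hrp | ⟨s, hs, rfl⟩
      · have := hp.2 r' hrp
        simp [List.count_cons]; omega
      · rcases prefix_cons_cases hs with rfl | ⟨s', hs', rfl⟩
        · have := hp.2 p (List.prefix_refl p)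
          simp [List.count_cons, List.count_append, hp.1]
        · have h1 := hq.2 s' hs'
          simp [List.count_cons, List.count_append, hp.1]
          omega

lemma motzkin_cons_H {t : List MStep} (h : IsMotzkin (MStep.H :: t)) : IsMotzkin t := by
  constructor
  · have := h.1; simp [List.count_cons] at this; omega
  · intro r hr
    have := h.2 (MStep.H :: r) (List.cons_prefix_cons.mpr ⟨rfl, hr⟩)
    simp [List.count_cons] at this
    omega

lemma not_motzkin_cons_D {t : List MStep} (h : IsMotzkin (MStep.D :: t)) : False := by
  have := h.2 [MStep.D] ⟨t, rfl⟩
  simp at this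

/-- Main structure lemma for a Motzkin path starting with U. -/
lemma motzkin_cons_U {t : List MStep} (h : IsMotzkin (MStep.U :: t)) :
    t = (spl 0 t).1 ++ MStep.D :: (spl 0 t).2 ∧
    IsMotzkin (spl 0 t).1 ∧ IsMotzkin (spl 0 t).2 := by
  have h1 : t.count MStep.D = t.count MStep.U + 0 + 1 := by
    have := h.1; simp [List.count_cons] at this; omega
  have h2 : ∀ r, r <+: t → r.count MStep.D ≤ r.count MStep.U + 0 + 1 := by
    intro r hr
    have := h.2 (MStep.U :: r) (List.cons_prefix_cons.mpr ⟨rfl, hr⟩)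
    simp [List.count_cons] at this; omega
  obtain ⟨e1, e2, e3⟩ := spl_sound t 0 h1 h2
  set p := (spl 0 t).1
  set q := (spl 0 t).2
  have hp : IsMotzkin p := ⟨by omega, fun r hr => by have := e3 r hr; omega⟩
  refine ⟨e1, hp, ?_, ?_⟩
  · -- counts of q
    have : t.count MStep.D = p.count MStep.D + 1 + q.count MStep.D := by
      rw [e1]; simp [List.count_append, List.count_cons]; omega
    have ht2 : t.count MStep.U = p.count MStep.U + q.count MStep.U := by
      rw [e1]; simp [List.count_append, List.count_cons]
    omega
  · intro r hr
    have hpre : p ++ MStep.D :: r <+: t := by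
      rw [e1]
      exact (List.prefix_append_right_inj p).mpr (List.cons_prefix_cons.mpr ⟨rfl, hr⟩)
    have := h2 _ hpre
    simp [List.count_append, List.count_cons] at this
    omega

lemma phi_spec : ∀ w : List MStep, IsMotzkin w →
    IsMotzkin (phi w) ∧ (phi w).length = w.length ∧
    (phi w).count MStep.U = w.count MStep.U ∧ phi (phi w) = w := by
  intro w
  induction w with
  | nil => intro _; exact ⟨⟨rfl, fun p hp => by simp [List.prefix_nil.mp hp]⟩, rfl, rfl, rfl⟩
  | cons x t ih =>
    intro h
    cases x with
    | D => exact absurd h not_motzkin_cons_D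
    | H =>
      have ht := motzkin_cons_H h
      obtain ⟨i1, i2, i3, i4⟩ := ih ht
      refine ⟨?_, ?_, ?_, ?_⟩
      · constructor
        · simp only [phi, List.count_cons]
          have := i1.1; simp; omega
        · intro r hr
          simp only [phi] at hr
          rcases prefix_cons_cases hr with rfl | ⟨r', hr', rfl⟩
          · simp
          · have := i1.2 r' hr'
            simp [List.count_cons]; omega
      · simp [phi, i2]
      · simp [phi, List.count_cons, i3]
      · simp [phi, i4]
    | U =>
      obtain ⟨e1, hp, hq⟩ := motzkin_cons_U h
      set p := (spl 0 t).1 with hpdef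
      set q := (spl 0 t).2 with hqdef
      have hphi : phi (MStep.U :: t) = MStep.U :: (q ++ MStep.D :: p) := rfl
      have hspl2 : spl 0 (q ++ MStep.D :: p) = (q, p) :=
        spl_eq q 0 p (by have := hq.1; omega) (fun r hr => by have := hq.2 r hr; omega)
      refine ⟨?_, ?_, ?_, ?_⟩
      · rw [hphi]; exact motzkin_UD hq hp
      · rw [hphi, e1]; simp; omega
      · rw [hphi, e1]; simp [List.count_append, List.count_cons]; omega
      · rw [hphi]
        show MStep.U :: ((spl 0 (q ++ MStep.D :: p)).2 ++ MStep.D :: (spl 0 (q ++ MStep.D :: p)).1) = _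
        rw [hspl2, ← e1]

lemma phi_replicate (n : ℕ) : phi (List.replicate n MStep.H) = List.replicate n MStep.H := by
  induction n with
  | zero => rfl
  | succ n ih =>
    show MStep.H :: phi (List.replicate n MStep.H) = MStep.H :: List.replicate n MStep.H
    rw [ih]

lemma motzkin_replicate (n : ℕ) : IsMotzkin (List.replicate n MStep.H) := by
  constructor
  · simp [List.count_replicate]
  · intro r hr
    have := hr.sublist.count_le MStep.D
    simp [List.count_replicate] at this
    omega

lemma phi_fix : ∀ w : List MStep, IsMotzkin w → Even (w.count MStep.U) → phi w = w →
    w = List.replicate w.length MStep.H := by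
  intro w
  induction w with
  | nil => intro _ _ _; rfl
  | cons x t ih =>
    intro h heven hfix
    cases x with
    | D => exact absurd h not_motzkin_cons_D
    | H =>
      have ht := motzkin_cons_H h
      have heven' : Even (t.count MStep.U) := by
        simp [List.count_cons] at heven ⊢; simpa using heven
      have hfix' : phi t = t := by
        have h' : MStep.H :: phi t = MStep.H :: t := hfix
        simpa using h'
      have := ih ht heven' hfix'
      rw [List.length_cons, List.replicate_succ, ← this]
    | U =>
      exfalso
      obtain ⟨e1, hp, hq⟩ := motzkin_cons_U h
      set p := (spl 0 t).1 with hpdef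
      set q := (spl 0 t).2 with hqdef
      have hphi : phi (MStep.U :: t) = MStep.U :: (q ++ MStep.D :: p) := rfl
      have heq : q ++ MStep.D :: p = p ++ MStep.D :: q := by
        have h' := hphi.symm.trans hfix
        rw [e1] at h'
        simpa using h'
      have h1 : spl 0 (q ++ MStep.D :: p) = (q, p) :=
        spl_eq q 0 p (by have := hq.1; omega) (fun r hr => by have := hq.2 r hr; omega)
      have h2 : spl 0 (p ++ MStep.D :: q) = (p, q) :=
        spl_eq p 0 q (by have := hp.1; omega) (fun r hr => by have := hp.2 r hr; omega)
      have hpq : p = q := by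
        have h3 : (q, p) = (p, q) := by rw [← h1, heq, h2]
        exact (congrArg Prod.fst h3).symm
      have hcount : (MStep.U :: t).count MStep.U = 2 * p.count MStep.U + 1 := by
        rw [e1, hpq]
        simp [List.count_cons, List.count_append]
        omega
      rw [hcount] at heven
      simp [Nat.even_iff] at heven
/-! ### Counting -/

lemma finite_aux (n : ℕ) (P : List MStep → Prop) :
    Finite {w : List MStep // w.length = n ∧ P w} := by
  have hs : {w : List MStep | w.length = n ∧ P w} ⊆ {w : List MStep | w.length = n} :=
    fun w hw => hw.1
  exact ((List.finite_length_eq MStep n).subset hs).to_subtype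

lemma card_split (n : ℕ) : motzkinNum n = evenMotzkin n + oddMotzkin n := by
  classical
  have := finite_aux n IsMotzkin
  have := finite_aux n (fun w => IsMotzkin w ∧ Even (w.count MStep.U))
  have := finite_aux n (fun w => IsMotzkin w ∧ Odd (w.count MStep.U))
  rw [motzkinNum, evenMotzkin, oddMotzkin, ← Nat.card_sum]
  apply Nat.card_congr
  exact {
    toFun := fun x => if h : Even (x.1.count MStep.U) then
      Sum.inl ⟨x.1, x.2.1, x.2.2, h⟩ else
      Sum.inr ⟨x.1, x.2.1, x.2.2, Nat.not_even_iff_odd.mp h⟩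
    invFun := Sum.elim (fun x => ⟨x.1, x.2.1, x.2.2.1⟩) (fun x => ⟨x.1, x.2.1, x.2.2.1⟩)
    left_inv := by
      rintro ⟨w, h1, h2⟩
      by_cases h : Even (w.count MStep.U) <;> simp [h]
    right_inv := by
      rintro (⟨w, h1, h2, h3⟩ | ⟨w, h1, h2, h3⟩)
      · simp [h3]
      · simp [Nat.not_even_iff_odd.mpr h3] }

lemma even_card_fpf {α : Type} [Fintype α] [DecidableEq α] (f : α → α)
    (h2 : ∀ a, f (f a) = a) :
    ∀ s : Finset α, (∀ a ∈ s, f a ∈ s) → (∀ a ∈ s, f a ≠ a) → Even s.card := by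
  intro s
  induction s using Finset.strongInduction with
  | _ s ih =>
    intro hcl hnf
    rcases s.eq_empty_or_nonempty with rfl | ⟨x, hx⟩
    · simp
    · have hfx : f x ∈ s := hcl x hx
      have hne : f x ≠ x := hnf x hx
      have hsub : {x, f x} ⊆ s := by
        intro y hy
        simp at hy
        rcases hy with rfl | rfl
        · exact hx
        · exact hfx
      have hcardpair : ({x, f x} : Finset α).card = 2 := by
        rw [Finset.card_insert_of_notMem (by simp [Ne.symm hne]), Finset.card_singleton]
      have hss : s \ {x, f x} ⊂ s := by
        apply Finset.sdiff_ssubset hsub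
        simp
      have hcl' : ∀ a ∈ s \ {x, f x}, f a ∈ s \ {x, f x} := by
        intro a ha
        simp only [Finset.mem_sdiff, Finset.mem_insert, Finset.mem_singleton] at ha ⊢
        push_neg at ha ⊢
        refine ⟨hcl a ha.1, ?_, ?_⟩
        · intro hfa
          apply ha.2.2
          rw [← h2 a, hfa]
        · intro hfa
          apply ha.2.1
          have := congrArg f hfa
          rwa [h2, h2] at this
      have hnf' : ∀ a ∈ s \ {x, f x}, f a ≠ a := fun a ha => hnf a (Finset.mem_sdiff.mp ha).1
      have heven := ih _ hss hcl' hnf'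
      have hcard : (s \ {x, f x}).card = s.card - 2 := by
        rw [Finset.card_sdiff_of_subset hsub, hcardpair]
      have h2le : 2 ≤ s.card := by
        calc 2 = ({x, f x} : Finset α).card := hcardpair.symm
        _ ≤ s.card := Finset.card_le_card hsub
      rw [Nat.even_iff] at heven ⊢
      omega

lemma odd_card_of_involutive {α : Type} [Finite α] (f : α → α)
    (h2 : ∀ a, f (f a) = a) (a₀ : α) (hfix : ∀ a, f a = a ↔ a = a₀) :
    Odd (Nat.card α) := by
  classical
  have := Fintype.ofFinite α
  rw [Nat.card_eq_fintype_card]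
  have hsplit := Finset.card_filter_add_card_filter_not
    (s := (Finset.univ : Finset α)) (p := fun a => a = a₀)
  have h1 : (Finset.univ.filter (fun a => a = a₀)).card = 1 := by
    have : Finset.univ.filter (fun a => a = a₀) = {a₀} := by
      ext b
      simp
    rw [this, Finset.card_singleton]
  have h2' : Even ((Finset.univ.filter (fun a => ¬a = a₀)).card) := by
    apply even_card_fpf f h2
    · intro a ha
      simp only [Finset.mem_filter, Finset.mem_univ, true_and] at ha ⊢
      intro hfa
      apply ha
      have ha0 : f a₀ = a₀ := (hfix a₀).mpr rfl
      have := congrArg f hfa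
      rw [h2] at this
      rw [this, ha0]
    · intro a ha
      simp only [Finset.mem_filter, Finset.mem_univ, true_and] at ha
      exact fun hfa => ha ((hfix a).mp hfa)
  rw [Nat.even_iff] at h2'
  rw [Nat.odd_iff]
  rw [Finset.card_univ] at hsplit
  omega

lemma odd_evenMotzkin (n : ℕ) : Odd (evenMotzkin n) := by
  have hF := finite_aux n (fun w => IsMotzkin w ∧ Even (w.count MStep.U))
  rw [evenMotzkin]
  set α := {w : List MStep // w.length = n ∧ IsMotzkin w ∧ Even (w.count MStep.U)}
  have : Finite α := hF
  refine odd_card_of_involutive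
    (fun x => ⟨phi x.1, ?_, ?_, ?_⟩) ?_ ⟨List.replicate n MStep.H, ?_, ?_, ?_⟩ ?_
  · rw [(phi_spec x.1 x.2.2.1).2.1, x.2.1]
  · exact (phi_spec x.1 x.2.2.1).1
  · rw [(phi_spec x.1 x.2.2.1).2.2.1]; exact x.2.2.2
  · intro a
    exact Subtype.ext ((phi_spec a.1 a.2.2.1).2.2.2)
  · simp
  · exact motzkin_replicate n
  · simp [List.count_replicate]
  · intro a
    constructor
    · intro hfa
      have hfa' : phi a.1 = a.1 := congrArg Subtype.val hfa
      have := phi_fix a.1 a.2.2.1 a.2.2.2 hfa'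
      apply Subtype.ext
      rw [this, a.2.1]
    · intro ha
      apply Subtype.ext
      show phi a.1 = a.1
      rw [congrArg Subtype.val ha]
      exact phi_replicate n

end MotzkinAux

theorem stmt_19 : ∀ n : ℕ,
    oddMotzkin n = motzkinNum n - evenMotzkin n ∧
    Odd (evenMotzkin n) ∧
    oddMotzkin n ≡ motzkinNum n + 1 [MOD 2] := by
  intro n
  have hsum := MotzkinAux.card_split n
  have hodd := MotzkinAux.odd_evenMotzkin n
  rw [Nat.odd_iff] at hodd
  refine ⟨by omega, Nat.odd_iff.mpr hodd, ?_⟩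
  unfold Nat.ModEq
  omega
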